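/- arXiv:2208.05349 — 8 statements merged into one kernel-verified Lean document; each statement's English description precedes it below -/
import Mathlib

section
/- Let Ω be a set, f: Ω → Ω a map, φ: Ω → ℝ^d, Φ: Ω → ℝ^L an injective map, g: ℝ^d × ℝ^L → ℝ^L a map satisfying Φ ∘ f = g ∘ (φ × Φ) (i.e., Φ(f(ω)) = g(φ(ω), Φ(ω)) for all ω), and w: ℝ^L → ℝ^d a map satisfying w ∘ Φ = φ ∘ f. Define h := (φ, Φ): Ω → ℝ^d × ℝ^L and the reconstructed system 𝒯: ℝ^d × ℝ^L → ℝ^d × ℝ^L, 𝒯(u, y) := (w(y), g(u, y)). Then h is injective, h ∘ f = 𝒯 ∘ h, and consequently 𝒯ⁿ(h(ω)) = h(fⁿ(ω)) for every n ∈ ℕ and ω ∈ Ω; that is, the reconstructed system 𝒯 restricted to X := h(Ω) is conjugate to f via h. -/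
open Filter Topology

/-- the reconstructed system 𝒯(u, y) = (w(y), g(u, y)) is
conjugate to the original dynamics f via h = (φ, Φ). -/
theorem reconstructed_system_conjugate {Ω : Type*} {d L : ℕ}
    (f : Ω → Ω) (φ : Ω → (Fin d → ℝ)) (Φ : Ω → (Fin L → ℝ))
    (hΦ : Function.Injective Φ)
    (g : (Fin d → ℝ) × (Fin L → ℝ) → (Fin L → ℝ))
    (hg : ∀ ω : Ω, Φ (f ω) = g (φ ω, Φ ω))
    (w : (Fin L → ℝ) → (Fin d → ℝ))
    (hw : ∀ ω : Ω, w (Φ ω) = φ (f ω)) :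
    let h : Ω → (Fin d → ℝ) × (Fin L → ℝ) := fun ω => (φ ω, Φ ω)
    let T : (Fin d → ℝ) × (Fin L → ℝ) → (Fin d → ℝ) × (Fin L → ℝ) := fun z => (w z.2, g z)
    Function.Injective h ∧ (∀ ω : Ω, h (f ω) = T (h ω)) ∧
      ∀ (n : ℕ) (ω : Ω), T^[n] (h ω) = h (f^[n] ω) := by
  intro h T
  have hsemi : ∀ ω, h (f ω) = T (h ω) := by
    intro ω; simp only [h, T, ← hg ω, ← hw ω]
  refine ⟨fun a b hab => hΦ (congrArg Prod.snd hab), hsemi, ?_⟩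
  intro n
  induction n with
  | zero => intro ω; simp
  | succ k ih =>
    intro ω
    rw [Function.iterate_succ_apply', Function.iterate_succ_apply', ih, ← hsemi]
end

section
/- Let (Ω, μ) be a probability space and f: Ω → Ω an invertible measure-preserving transformation which is strongly mixing in the sense that for all ψ₁, ψ₂ ∈ L²(μ), ⟨ψ₁, Uⁿψ₂⟩ → (∫ ψ̄₁ dμ)(∫ ψ₂ dμ) as n → ∞, where U is the Koopman operator. Let W be a finite-dimensional subspace of L²(μ) containing the constant functions, with orthogonal projection π, and let φ ∈ L²(μ). Then lim_{n→∞} ‖(Id − π) Uⁿφ‖_{L²(μ)} = ‖φ − ∫ φ dμ‖_{L²(μ)}. -/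
/-!
Subtracting the mean `c` of `φ` splits `Uⁿφ = Uⁿ(φ - c) + c`, and the constant `c ∈ W` does not
contribute to the residual `(Id - π) Uⁿφ`. Strong mixing says that `Uⁿ(φ - c)` converges weakly to
`0`; since `W` is finite dimensional, its projection onto `W` then tends to `0` in norm, while
`‖Uⁿ(φ - c)‖ = ‖φ - c‖` because the Koopman operator is an isometry.
-/

open Filter Topology MeasureTheory

namespace MeasureTheory.Lp

variable {α β E : Type*} [MeasurableSpace α] [MeasurableSpace β] [NormedAddCommGroup E]
  {p : ENNReal} {μ : Measure α} {ν : Measure β} {f : α → β}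

theorem compMeasurePreserving_toLp_const [IsFiniteMeasure μ] [IsFiniteMeasure ν]
    (hf : MeasurePreserving f μ ν) (c : E) :
    compMeasurePreserving f hf ((memLp_const c).toLp fun _ => c : Lp E p ν) =
      (memLp_const c).toLp fun _ => c :=
  rfl

theorem eq_compMeasurePreserving_of_ae_eq_comp (hf : MeasurePreserving f μ ν)
    {U : Lp E p ν → Lp E p μ} (hU : ∀ g, U g =ᵐ[μ] g ∘ f) :
    U = compMeasurePreserving f hf :=
  funext fun g => Lp.ext <| (hU g).trans (coeFn_compMeasurePreserving g hf).symm

theorem coe_pow_eq_compMeasurePreserving_iterate {𝕜 : Type*} [NormedRing 𝕜] [Module 𝕜 E]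
    [IsBoundedSMul 𝕜 E] [Fact (1 ≤ p)] {T : α → α} (hT : MeasurePreserving T μ μ)
    {U : Lp E p μ →L[𝕜] Lp E p μ} (hU : ∀ g, U g =ᵐ[μ] g ∘ T) (n : ℕ) :
    ⇑(U ^ n) = compMeasurePreserving T^[n] (hT.iterate n) := by
  rw [FunLike.coe_pow_eq_iterate, eq_compMeasurePreserving_of_ae_eq_comp hT hU,
    compMeasurePreserving_iterate]

theorem integral_sub_toLp_integral [NormedSpace ℝ E] [CompleteSpace E] [Fact (1 ≤ p)]
    [IsProbabilityMeasure μ] (φ : Lp E p μ) :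
    ∫ ω, (φ - (memLp_const (∫ x, φ x ∂μ)).toLp fun _ => ∫ x, φ x ∂μ : Lp E p μ) ω ∂μ = 0 := by
  have hφ : Integrable φ μ := (Lp.memLp φ).integrable Fact.out
  rw [integral_congr_ae ((Lp.coeFn_sub _ _).trans
    (EventuallyEq.sub (EventuallyEq.refl _ _) (MemLp.coeFn_toLp _)))]
  simp [integral_sub hφ (integrable_const _)]

end MeasureTheory.Lp

namespace Submodule

variable {𝕜 E ι : Type*} [RCLike 𝕜] [NormedAddCommGroup E] [InnerProductSpace 𝕜 E]
  (K : Submodule 𝕜 E)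

theorem tendsto_starProjection_zero_of_tendsto_inner [FiniteDimensional 𝕜 K] {l : Filter ι}
    {x : ι → E} (hx : ∀ v ∈ K, Tendsto (fun i => inner 𝕜 v (x i)) l (𝓝 0)) :
    Tendsto (fun i => K.starProjection (x i)) l (𝓝 0) := by
  let b := stdOrthonormalBasis 𝕜 K
  have hsum : ∀ i, K.starProjection (x i) = ∑ j, inner 𝕜 (b j : E) (x i) • (b j : E) := fun i => by
    simp [starProjection_apply, b.orthogonalProjectionOnto_apply_eq_sum]
  simp_rw [hsum]
  simpa using tendsto_finsetSum Finset.univ fun j _ =>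
    (hx (b j) (b j).2).smul_const (b j : E)

theorem starProjection_add_of_mem [K.HasOrthogonalProjection] (x : E) {k : E} (hk : k ∈ K) :
    x + k - K.starProjection (x + k) = x - K.starProjection x := by
  rw [map_add, starProjection_eq_self_iff.2 hk]
  abel

end Submodule

theorem tendsto_norm_sub_of_tendsto_zero {E ι : Type*} [SeminormedAddCommGroup E] {l : Filter ι}
    {x y : ι → E} {r : ℝ} (hx : Tendsto (fun i => ‖x i‖) l (𝓝 r)) (hy : Tendsto y l (𝓝 0)) :
    Tendsto (fun i => ‖x i - y i‖) l (𝓝 r) := by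
  have hdiff : Tendsto (fun i => ‖x i - y i‖ - ‖x i‖) l (𝓝 0) :=
    squeeze_zero_norm (fun i => by simpa using abs_norm_sub_norm_le (x i - y i) (x i))
      (by simpa using hy.norm)
  simpa using hdiff.add hx

/-- for a strongly mixing system, the direct forecast error
‖(Id − π) Uⁿφ‖ converges (along the full sequence of times) to the L²
deviation of φ from its mean. -/
theorem direct_forecast_error_strong_mixing {Ω : Type*} [MeasurableSpace Ω]
    (μ : Measure Ω) [IsProbabilityMeasure μ]
    (f : Ω ≃ᵐ Ω) (hf : MeasurePreserving f μ μ)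
    (U : Lp ℂ 2 μ →L[ℂ] Lp ℂ 2 μ)
    (hU : ∀ h : Lp ℂ 2 μ, ⇑(U h) =ᵐ[μ] fun x => h (f x))
    (hmix : ∀ ψ₁ ψ₂ : Lp ℂ 2 μ,
      Tendsto (fun n : ℕ => (inner ℂ ψ₁ ((U ^ n) ψ₂) : ℂ)) atTop
        (nhds ((∫ x, (starRingEnd ℂ) (ψ₁ x) ∂μ) * (∫ x, ψ₂ x ∂μ))))
    (W : Submodule ℂ (Lp ℂ 2 μ)) [FiniteDimensional ℂ W]
    (hWconst : ∀ h : Lp ℂ 2 μ, (∃ c : ℂ, ⇑h =ᵐ[μ] fun _ => c) → h ∈ W)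
    (φ : Lp ℂ 2 μ) :
    Tendsto (fun n : ℕ =>
        ‖(U ^ n) φ - ((Submodule.orthogonalProjection W ((U ^ n) φ) : W) : Lp ℂ 2 μ)‖)
      atTop
      (nhds ‖φ - (memLp_const (∫ x, φ x ∂μ)).toLp (fun _ => ∫ x, φ x ∂μ)‖) := by
  set c := ∫ x, φ x ∂μ
  set cLp : Lp ℂ 2 μ := (memLp_const c).toLp fun _ => c
  have hUpow := Lp.coe_pow_eq_compMeasurePreserving_iterate hf hU
  have hsplit : ∀ n, (U ^ n) φ = (U ^ n) (φ - cLp) + cLp := fun n => by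
    rw [map_sub, hUpow, Lp.compMeasurePreserving_toLp_const, sub_add_cancel]
  have hmean : ∫ x, (φ - cLp) x ∂μ = 0 := Lp.integral_sub_toLp_integral φ
  have hweak : ∀ ψ, Tendsto (fun n => inner ℂ ψ ((U ^ n) (φ - cLp))) atTop (𝓝 0) := fun ψ => by
    simpa only [hmean, mul_zero] using hmix ψ (φ - cLp)
  have hcW : cLp ∈ W := hWconst cLp ⟨c, MemLp.coeFn_toLp _⟩
  have hisom : ∀ n, ‖(U ^ n) (φ - cLp)‖ = ‖φ - cLp‖ := fun n => by
    rw [hUpow, Lp.norm_compMeasurePreserving]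
  show Tendsto (fun n => ‖(U ^ n) φ - W.starProjection ((U ^ n) φ)‖) atTop (𝓝 ‖φ - cLp‖)
  simp_rw [hsplit, W.starProjection_add_of_mem _ hcW]
  exact tendsto_norm_sub_of_tendsto_zero (by simp_rw [hisom]; exact tendsto_const_nhds)
    (W.tendsto_starProjection_zero_of_tendsto_inner fun ψ _ => hweak ψ)
end

section
/- Let H be a complex Hilbert space, U: H → H a unitary operator, and let φ ∈ H belong to the closed linear span of the eigenvectors of U. Then for every ε > 0 there exists a finite-dimensional subspace W of H such that for every n ∈ ℕ, ‖(Id − π_W) Uⁿφ‖ < ε, where π_W is the orthogonal projection onto W. -/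
open Filter Topology

/-!
Finitely many eigenvectors already span some `ψ` with `‖φ - ψ‖ < ε`; their span `W` is
finite-dimensional and invariant under `U`. As `U` is isometric and `Uⁿψ ∈ W`, the distance from
`Uⁿφ` to `W` is at most `‖Uⁿφ - Uⁿψ‖ = ‖φ - ψ‖ < ε`, whatever `n` is.
-/

namespace Module.End

variable {R M : Type*} [Semiring R] [AddCommMonoid M] [Module R M]

theorem span_mem_invtSubmodule_of_forall_eq_smul (f : End R M) {S : Set M}
    (hS : ∀ v ∈ S, ∃ c : R, f v = c • v) : Submodule.span R S ∈ f.invtSubmodule := by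
  rw [mem_invtSubmodule, Submodule.span_le]
  intro v hv
  obtain ⟨c, hc⟩ := hS v hv
  rw [SetLike.mem_coe, Submodule.mem_comap, hc]
  exact Submodule.smul_mem _ c (Submodule.subset_span hv)

theorem invtSubmodule.pow_mem {f : End R M} {p : Submodule R M} (hp : p ∈ f.invtSubmodule)
    (n : ℕ) : p ∈ (f ^ n).invtSubmodule := by
  induction n with
  | zero => simp
  | succ n ih => rw [pow_succ, mul_eq_comp]; exact invtSubmodule.comp _ ih hp

end Module.End

theorem ContinuousLinearMap.norm_pow_apply_of_forall_norm_map {R E : Type*} [Semiring R]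
    [SeminormedAddCommGroup E] [Module R E] {U : E →L[R] E} (hU : ∀ x, ‖U x‖ = ‖x‖)
    (n : ℕ) (x : E) : ‖(U ^ n) x‖ = ‖x‖ := by
  rw [FunLike.coe_pow_eq_iterate,
    Function.Semiconj.iterate_right (f := norm) (gb := id) hU n x, Function.iterate_id, id]

namespace Submodule

variable {𝕜 E : Type*} [RCLike 𝕜] [NormedAddCommGroup E] [InnerProductSpace 𝕜 E]

theorem norm_sub_starProjection_le {K : Submodule 𝕜 E} [K.HasOrthogonalProjection] (x : E)
    {y : E} (hy : y ∈ K) : ‖x - K.starProjection x‖ ≤ ‖x - y‖ := by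
  rw [starProjection_minimal]
  exact ciInf_le ⟨0, Set.forall_mem_range.2 fun _ ↦ norm_nonneg _⟩ (⟨y, hy⟩ : K)

theorem norm_sub_starProjection_pow_apply_le {K : Submodule 𝕜 E} [K.HasOrthogonalProjection]
    {U : E →L[𝕜] E} (hU : ∀ x, ‖U x‖ = ‖x‖) (hK : K ∈ Module.End.invtSubmodule (U : E →ₗ[𝕜] E))
    (x : E) {y : E} (hy : y ∈ K) (n : ℕ) :
    ‖(U ^ n) x - K.starProjection ((U ^ n) x)‖ ≤ ‖x - y‖ := calc
  _ ≤ ‖(U ^ n) x - (U ^ n) y‖ := by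
    refine norm_sub_starProjection_le _ ?_
    have hUny := Module.End.invtSubmodule.pow_mem hK n hy
    rwa [← ContinuousLinearMap.toLinearMap_pow] at hUny
  _ = ‖x - y‖ := by rw [← map_sub, ContinuousLinearMap.norm_pow_apply_of_forall_norm_map hU]

end Submodule

theorem discrete_spectrum_uniform_approximation_general {H : Type*} [NormedAddCommGroup H]
    [InnerProductSpace ℂ H]
    (U : H →L[ℂ] H) (hU_iso : ∀ x : H, ‖U x‖ = ‖x‖)
    (φ : H)
    (hφ : φ ∈ (Submodule.span ℂ {v : H | v ≠ 0 ∧ ∃ c : ℂ, U v = c • v}).topologicalClosure)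
    (ε : ℝ) (hε : 0 < ε) :
    ∃ (W : Submodule ℂ H) (hfd : FiniteDimensional ℂ W),
      ∀ n : ℕ,
        ‖(U ^ n) φ - (letI := hfd; ((Submodule.orthogonalProjection W ((U ^ n) φ) : W) : H))‖ < ε := by
  obtain ⟨ψ, hψ, hφψ⟩ := Metric.mem_closure_iff.1 hφ ε hε
  obtain ⟨T, hTS, hψT⟩ := Submodule.mem_span_finite_of_mem_span hψ
  have hT : Submodule.span ℂ (T : Set H) ∈ Module.End.invtSubmodule (U : H →ₗ[ℂ] H) :=
    Module.End.span_mem_invtSubmodule_of_forall_eq_smul _ fun v hv ↦ (hTS hv).2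
  refine ⟨_, FiniteDimensional.span_finset ℂ T, fun n ↦ ?_⟩
  rw [← Submodule.starProjection_apply]
  exact (Submodule.norm_sub_starProjection_pow_apply_le hU_iso hT φ hψT n).trans_lt
    (by rwa [← dist_eq_norm])

/-- if φ lies in the closed span of the eigenvectors of a unitary
operator U, then for every ε > 0 there is a finite-dimensional subspace W such
that ‖(Id − π_W) Uⁿφ‖ < ε for all n. -/
theorem discrete_spectrum_uniform_approximation {H : Type*} [NormedAddCommGroup H]
    [InnerProductSpace ℂ H] [CompleteSpace H]
    (U : H →L[ℂ] H) (hU_iso : ∀ x : H, ‖U x‖ = ‖x‖) (hU_surj : Function.Surjective U)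
    (φ : H)
    (hφ : φ ∈ (Submodule.span ℂ {v : H | v ≠ 0 ∧ ∃ c : ℂ, U v = c • v}).topologicalClosure)
    (ε : ℝ) (hε : 0 < ε) :
    ∃ (W : Submodule ℂ H) (hfd : FiniteDimensional ℂ W),
      ∀ n : ℕ,
        ‖(U ^ n) φ - (letI := hfd; ((Submodule.orthogonalProjection W ((U ^ n) φ) : W) : H))‖ < ε :=
  discrete_spectrum_uniform_approximation_general U hU_iso φ hφ ε hε
end

section
/- Let Ω be a set, f: Ω → Ω a map, G: Ω → GL(m, ℝ), and 𝒢 the associated matrix cocycle. Suppose (E(ω))_{ω∈Ω} is a family of linear subspaces of ℝ^m with G(ω) E(ω) = E(f(ω)) for all ω. Fix ω ∈ Ω, constants λ > 0, ε ∈ (0, λ), and C ≥ 1 such that for all n ≥ 0: ‖𝒢(n, ω) v‖ ≤ C e^{(λ+ε)n} ‖v‖ for all v ∈ E(ω), and ‖𝒢(n, ω)^{−1} v‖ ≤ C e^{−(λ−ε)n} ‖v‖ for all v ∈ E(fⁿω). Let d: Ω → ℝ^m satisfy d(ω') ∈ E(ω') for all ω' ∈ Ω and sup_{ω'∈Ω}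 ‖d(ω')‖ =: D∞ < ∞. Then for every n ≥ 1: ‖(Ψⁿ d)(ω)‖ ≤ C² D∞ · (e^{(λ−ε)} − 1)^{−1} · e^{n(λ+ε)}. -/
open Filter Topology

/-- The matrix cocycle over (Ω, f) generated by G : Ω → GL(m, ℝ):
𝒢(0, ω) = Id and 𝒢(n, ω) = G(f^{n−1}ω) ⋯ G(ω). -/
def matCocycle {Ω : Type*} {m : ℕ} (f : Ω → Ω)
    (G : Ω → Matrix.GeneralLinearGroup (Fin m) ℝ) :
    ℕ → Ω → Matrix.GeneralLinearGroup (Fin m) ℝ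
  | 0, _ => 1
  | n + 1, ω => matCocycle f G n (f ω) * G ω

/-- The graph-transform operator (Ψⁿ d)(ω) = Σ_{j=1}^{n} 𝒢(n−j, f^{j}ω) d(f^{j}ω). -/
noncomputable def graphTransform {Ω : Type*} {m : ℕ} (f : Ω → Ω)
    (G : Ω → Matrix.GeneralLinearGroup (Fin m) ℝ) (d : Ω → (Fin m → ℝ))
    (n : ℕ) (ω : Ω) : Fin m → ℝ :=
  ∑ j ∈ Finset.Icc 1 n,
    ((matCocycle f G (n - j) (f^[j] ω) : Matrix (Fin m) (Fin m) ℝ)).mulVec (d (f^[j] ω))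

/-!
Write each summand of `Ψⁿ d` as `𝒢(n - j, fʲ ω) d(fʲ ω) = 𝒢(n, ω) (𝒢(j, ω)⁻¹ d(fʲ ω))`. By
equivariance `𝒢(j, ω)⁻¹ d(fʲ ω)` lies in `E ω`, so the backward bound at time `j` followed by the
forward bound at time `n` gives `C² D∞ e^{(λ+ε)n} e^{-(λ-ε)j}`; summing the geometric series
`Σ_{j ≥ 1} e^{-(λ-ε)j} = (e^{λ-ε} - 1)⁻¹` finishes the proof.
-/

open Finset Real Matrix

theorem Matrix.GeneralLinearGroup.inv_mulVec_mem_of_map_eq {n R : Type*} [Fintype n]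
    [DecidableEq n] [CommRing R] (g : GL n R) {E E' : Submodule R (n → R)}
    (h : E.map (g : Matrix n n R).mulVecLin = E') {v : n → R} (hv : v ∈ E') :
    (g : Matrix n n R)⁻¹ *ᵥ v ∈ E := by
  obtain ⟨u, hu, rfl⟩ := h ▸ hv
  rw [← GeneralLinearGroup.coe_inv, mulVecLin_apply, mulVec_mulVec, ← GeneralLinearGroup.coe_mul,
    inv_mul_cancel, GeneralLinearGroup.coe_one, one_mulVec]
  exact hu

theorem sum_Icc_exp_neg_mul_le {a : ℝ} (ha : 0 < a) (n : ℕ) :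
    ∑ j ∈ Icc 1 n, exp (-a * j) ≤ (exp a - 1)⁻¹ := by
  have hr : exp (-a) < 1 := exp_lt_one_iff.mpr (by linarith)
  calc ∑ j ∈ Icc 1 n, exp (-a * j) = ∑ j ∈ Ico 1 (n + 1), exp (-a) ^ j := by
        simp only [← exp_nat_mul, mul_comm]; rfl
    _ ≤ exp (-a) ^ 1 / (1 - exp (-a)) := geom_sum_Ico_le_of_lt_one (exp_pos _).le hr
    _ = (exp a - 1)⁻¹ := by
        rw [exp_neg]; field_simp

section Cocycle

variable {Ω : Type*} {m : ℕ} (f : Ω → Ω) (G : Ω → GL (Fin m) ℝ)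

theorem matCocycle_add (k j : ℕ) (ω : Ω) :
    matCocycle f G (k + j) ω = matCocycle f G k (f^[j] ω) * matCocycle f G j ω := by
  induction j generalizing ω with
  | zero => simp [matCocycle]
  | succ j ih =>
    rw [← add_assoc, matCocycle, matCocycle, ih, Function.iterate_succ_apply, mul_assoc]

theorem matCocycle_sub_mul_inv {j n : ℕ} (hjn : j ≤ n) (ω : Ω) :
    matCocycle f G (n - j) (f^[j] ω) = matCocycle f G n ω * (matCocycle f G j ω)⁻¹ := by
  rw [eq_mul_inv_iff_mul_eq, ← matCocycle_add, Nat.sub_add_cancel hjn]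

variable (E : Ω → Submodule ℝ (Fin m → ℝ))

theorem map_mulVecLin_matCocycle
    (hE : ∀ ω, (E ω).map (G ω : Matrix (Fin m) (Fin m) ℝ).mulVecLin = E (f ω)) (j : ℕ) (ω : Ω) :
    (E ω).map (matCocycle f G j ω : Matrix (Fin m) (Fin m) ℝ).mulVecLin = E (f^[j] ω) := by
  induction j generalizing ω with
  | zero => simp [matCocycle, mulVecLin_one]
  | succ j ih =>
    rw [matCocycle, GeneralLinearGroup.coe_mul, mulVecLin_mul, Submodule.map_comp, hE, ih,
      Function.iterate_succ_apply]

theorem norm_matCocycle_sub_mulVec_le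
    (hE : ∀ ω, (E ω).map (G ω : Matrix (Fin m) (Fin m) ℝ).mulVecLin = E (f ω))
    {j n : ℕ} (hjn : j ≤ n) {ω : Ω} {A B : ℝ} (hA : 0 ≤ A)
    (hup : ∀ v ∈ E ω, ‖(matCocycle f G n ω : Matrix (Fin m) (Fin m) ℝ) *ᵥ v‖ ≤ A * ‖v‖)
    (hdown : ∀ v ∈ E (f^[j] ω),
      ‖(matCocycle f G j ω : Matrix (Fin m) (Fin m) ℝ)⁻¹ *ᵥ v‖ ≤ B * ‖v‖)
    {w : Fin m → ℝ} (hw : w ∈ E (f^[j] ω)) :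
    ‖(matCocycle f G (n - j) (f^[j] ω) : Matrix (Fin m) (Fin m) ℝ) *ᵥ w‖ ≤ A * B * ‖w‖ := by
  have hmem := (matCocycle f G j ω).inv_mulVec_mem_of_map_eq
    (map_mulVecLin_matCocycle f G E hE j ω) hw
  rw [matCocycle_sub_mul_inv f G hjn, GeneralLinearGroup.coe_mul, GeneralLinearGroup.coe_inv,
    ← mulVec_mulVec, mul_assoc]
  exact (hup _ hmem).trans (mul_le_mul_of_nonneg_left (hdown w hw) hA)

end Cocycle

theorem graphTransform_growth_pointwise_general {Ω : Type*} {m : ℕ} (f : Ω → Ω)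
    (G : Ω → Matrix.GeneralLinearGroup (Fin m) ℝ)
    (E : Ω → Submodule ℝ (Fin m → ℝ))
    (hE : ∀ ω' : Ω,
      Submodule.map ((G ω' : Matrix (Fin m) (Fin m) ℝ)).mulVecLin (E ω') = E (f ω'))
    (ω : Ω) (lam ε Cc : ℝ) (hεlam : ε < lam) (hCc : 1 ≤ Cc)
    (hup : ∀ n : ℕ, ∀ v ∈ E ω,
      ‖((matCocycle f G n ω : Matrix (Fin m) (Fin m) ℝ)).mulVec v‖
        ≤ Cc * Real.exp ((lam + ε) * n) * ‖v‖)
    (hdown : ∀ n : ℕ, ∀ v ∈ E (f^[n] ω),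
      ‖(((matCocycle f G n ω)⁻¹ : Matrix (Fin m) (Fin m) ℝ)).mulVec v‖
        ≤ Cc * Real.exp (-(lam - ε) * n) * ‖v‖)
    (d : Ω → (Fin m → ℝ)) (hdE : ∀ ω' : Ω, d ω' ∈ E ω')
    (Dinf : ℝ) (hDinf : ∀ ω' : Ω, ‖d ω'‖ ≤ Dinf) :
    ∀ n : ℕ, 1 ≤ n →
      ‖graphTransform f G d n ω‖
        ≤ Cc ^ 2 * Dinf * (Real.exp (lam - ε) - 1)⁻¹ * Real.exp ((lam + ε) * n) := by
  intro n _
  have hC : 0 ≤ Cc := zero_le_one.trans hCc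
  have hD : 0 ≤ Dinf := (norm_nonneg _).trans (hDinf ω)
  have hsummand : ∀ j ∈ Icc 1 n,
      ‖(matCocycle f G (n - j) (f^[j] ω) : Matrix (Fin m) (Fin m) ℝ) *ᵥ d (f^[j] ω)‖
        ≤ Cc ^ 2 * Dinf * exp ((lam + ε) * n) * exp (-(lam - ε) * j) := fun j hj => by
    calc _ ≤ Cc * exp ((lam + ε) * n) * (Cc * exp (-(lam - ε) * j)) * ‖d (f^[j] ω)‖ :=
          norm_matCocycle_sub_mulVec_le f G E hE (mem_Icc.mp hj).2 (by positivity)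
            (hup n) (hdown j) (hdE _)
      _ ≤ Cc * exp ((lam + ε) * n) * (Cc * exp (-(lam - ε) * j)) * Dinf := by
          gcongr; exact hDinf _
      _ = _ := by ring
  calc ‖graphTransform f G d n ω‖
      ≤ ∑ j ∈ Icc 1 n, Cc ^ 2 * Dinf * exp ((lam + ε) * n) * exp (-(lam - ε) * j) :=
        (norm_sum_le _ _).trans (sum_le_sum hsummand)
    _ ≤ Cc ^ 2 * Dinf * exp ((lam + ε) * n) * (exp (lam - ε) - 1)⁻¹ := by
        rw [← mul_sum]
        gcongr
        exact sum_Icc_exp_neg_mul_le (sub_pos.mpr hεlam) n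
    _ = _ := by ring

/-- pointwise growth bound for the graph transform along an
equivariant family of subspaces with Lyapunov exponent λ > 0, fluctuation
constant C and leakage rate ε: ‖(Ψⁿ d)(ω)‖ ≤ C² D∞ (e^{λ−ε} − 1)⁻¹ e^{(λ+ε)n}. -/
theorem graphTransform_growth_pointwise {Ω : Type*} {m : ℕ} (f : Ω → Ω)
    (G : Ω → Matrix.GeneralLinearGroup (Fin m) ℝ)
    (E : Ω → Submodule ℝ (Fin m → ℝ))
    (hE : ∀ ω' : Ω,
      Submodule.map ((G ω' : Matrix (Fin m) (Fin m) ℝ)).mulVecLin (E ω') = E (f ω'))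
    (ω : Ω) (lam ε Cc : ℝ) (hlam : 0 < lam) (hε0 : 0 < ε) (hεlam : ε < lam) (hCc : 1 ≤ Cc)
    (hup : ∀ n : ℕ, ∀ v ∈ E ω,
      ‖((matCocycle f G n ω : Matrix (Fin m) (Fin m) ℝ)).mulVec v‖
        ≤ Cc * Real.exp ((lam + ε) * n) * ‖v‖)
    (hdown : ∀ n : ℕ, ∀ v ∈ E (f^[n] ω),
      ‖(((matCocycle f G n ω)⁻¹ : Matrix (Fin m) (Fin m) ℝ)).mulVec v‖
        ≤ Cc * Real.exp (-(lam - ε) * n) * ‖v‖)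
    (d : Ω → (Fin m → ℝ)) (hdE : ∀ ω' : Ω, d ω' ∈ E ω')
    (Dinf : ℝ) (hDinf : ∀ ω' : Ω, ‖d ω'‖ ≤ Dinf) :
    ∀ n : ℕ, 1 ≤ n →
      ‖graphTransform f G d n ω‖
        ≤ Cc ^ 2 * Dinf * (Real.exp (lam - ε) - 1)⁻¹ * Real.exp ((lam + ε) * n) :=
  graphTransform_growth_pointwise_general f G E hE ω lam ε Cc hεlam hCc hup hdown d hdE Dinf hDinf
end

section
/- Let (Ω, μ) be a probability space, f: Ω → Ω a measure-preserving map, G: Ω → GL(m, ℝ) measurable, and 𝒢 the associated matrix cocycle. Suppose (E(ω))_{ω∈Ω} is a family of linear subspaces of ℝ^m with G(ω) E(ω) = E(f(ω)) for all ω. Fix constants λ > 0, ε ∈ (0, λ), and a measurable function C: Ω → [1, ∞) with C ∈ L²(μ) such that for μ-a.e. ω and all n ≥ 0: ‖𝒢(n, ω) v‖ ≤ C(ω) e^{(λ+ε)n} ‖v‖ for all v ∈ E(ω), and ‖𝒢(n, ω)^{−1} v‖ ≤ C(ω) e^{−(λ−ε)n} ‖v‖ for all v ∈ E(fⁿω).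 Let d: Ω → ℝ^m be measurable with d(ω') ∈ E(ω') for all ω' and sup_{ω'} ‖d(ω')‖ =: D∞ < ∞. Then for every n ≥ 1: ∫_Ω ‖(Ψⁿ d)(ω)‖ dμ(ω) ≤ ‖C‖²_{L²(μ)} D∞ (e^{(λ−ε)} − 1)^{−1} e^{n(λ+ε)}. -/
open Filter Topology MeasureTheory

/-! The forward bound on `E` gives, almost everywhere,
`‖Ψⁿd(ω)‖ ≤ D∞ ∑_{j=1}^n C(fʲω) e^{(λ+ε)(n-j)}`. Since `f` preserves `μ`, every `C ∘ fʲ` has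
integral `∫ C ≤ ∫ C²` (as `C ≥ 1`), and the geometric sum is at most
`e^{(λ+ε)n} / (e^{λ+ε} - 1) ≤ e^{(λ+ε)n} / (e^{λ-ε} - 1)`. -/

section GrowthBound

variable {Ω : Type*} [MeasurableSpace Ω] {μ : Measure Ω} {f : Ω → Ω}

theorem ae_norm_graphTransform_le {m : ℕ} (hf : Measure.QuasiMeasurePreserving f μ μ)
    {G : Ω → Matrix.GeneralLinearGroup (Fin m) ℝ} {E : Ω → Submodule ℝ (Fin m → ℝ)}
    {C : Ω → ℝ} (hC : ∀ ω, 0 ≤ C ω) {w : ℕ → ℝ} (hw : ∀ k, 0 ≤ w k)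
    (hgrowth : ∀ᵐ ω ∂μ, ∀ k : ℕ, ∀ v ∈ E ω,
      ‖((matCocycle f G k ω : Matrix (Fin m) (Fin m) ℝ)).mulVec v‖ ≤ C ω * w k * ‖v‖)
    {d : Ω → (Fin m → ℝ)} (hdE : ∀ ω, d ω ∈ E ω) {D : ℝ} (hD : ∀ ω, ‖d ω‖ ≤ D) (n : ℕ) :
    ∀ᵐ ω ∂μ, ‖graphTransform f G d n ω‖ ≤
      ∑ j ∈ Finset.Icc 1 n, C (f^[j] ω) * (w (n - j) * D) := by
  have hgrowth_iterates : ∀ᵐ ω ∂μ, ∀ j : ℕ, ∀ k : ℕ, ∀ v ∈ E (f^[j] ω),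
      ‖((matCocycle f G k (f^[j] ω) : Matrix (Fin m) (Fin m) ℝ)).mulVec v‖
        ≤ C (f^[j] ω) * w k * ‖v‖ :=
    ae_all_iff.mpr fun j => (hf.iterate j).ae hgrowth
  filter_upwards [hgrowth_iterates] with ω hω
  refine (norm_sum_le _ _).trans (Finset.sum_le_sum fun j _ => ?_)
  calc _ ≤ C (f^[j] ω) * w (n - j) * ‖d (f^[j] ω)‖ := hω j (n - j) _ (hdE _)
    _ ≤ C (f^[j] ω) * w (n - j) * D := by
        gcongr
        exacts [mul_nonneg (hC _) (hw _), hD _]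
    _ = _ := mul_assoc _ _ _

theorem integrable_sum_comp_iterate_mul (hf : MeasurePreserving f μ μ) {C : Ω → ℝ}
    (hC : Integrable C μ) (s : Finset ℕ) (c : ℕ → ℝ) :
    Integrable (fun ω => ∑ j ∈ s, C (f^[j] ω) * c j) μ :=
  integrable_finsetSum _ fun j _ =>
    ((hf.iterate j).integrable_comp_of_integrable hC).mul_const _

theorem integral_comp_iterate (hf : MeasurePreserving f μ μ) {C : Ω → ℝ}
    (hC : AEStronglyMeasurable C μ) (j : ℕ) :
    ∫ ω, C (f^[j] ω) ∂μ = ∫ ω, C ω ∂μ := by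
  rw [← (hf.iterate j).map_eq] at hC
  rw [← integral_map (hf.iterate j).measurable.aemeasurable hC, (hf.iterate j).map_eq]

theorem integral_sum_comp_iterate_mul (hf : MeasurePreserving f μ μ) {C : Ω → ℝ}
    (hC : Integrable C μ) (s : Finset ℕ) (c : ℕ → ℝ) :
    ∫ ω, ∑ j ∈ s, C (f^[j] ω) * c j ∂μ = (∫ ω, C ω ∂μ) * ∑ j ∈ s, c j := by
  have hterm (j : ℕ) : Integrable (fun ω => C (f^[j] ω) * c j) μ :=
    ((hf.iterate j).integrable_comp_of_integrable hC).mul_const _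
  rw [integral_finsetSum _ fun j _ => hterm j, Finset.mul_sum]
  refine Finset.sum_congr rfl fun j _ => ?_
  rw [integral_mul_const, integral_comp_iterate hf hC.aestronglyMeasurable]

theorem integral_le_integral_sq_of_one_le [IsFiniteMeasure μ] {C : Ω → ℝ} (hC1 : ∀ ω, 1 ≤ C ω)
    (hC : MemLp C 2 μ) : ∫ ω, C ω ∂μ ≤ ∫ ω, C ω ^ 2 ∂μ :=
  integral_mono (hC.integrable one_le_two) hC.integrable_sq fun ω => by
    nlinarith [hC1 ω]

end GrowthBound

theorem sum_Icc_pow_sub_le {x y : ℝ} (hy : 1 < y) (hyx : y ≤ x) (n : ℕ) :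
    ∑ j ∈ Finset.Icc 1 n, x ^ (n - j) ≤ (y - 1)⁻¹ * x ^ n := by
  have hreindex : ∑ j ∈ Finset.Icc 1 n, x ^ (n - j) = ∑ k ∈ Finset.range n, x ^ k := by
    refine Finset.sum_nbij' (n - ·) (n - ·) ?_ ?_ ?_ ?_ fun _ _ => rfl <;> intro j hj <;>
      simp only [Finset.mem_Icc, Finset.mem_range] at hj ⊢ <;>
      omega
  have hx : 1 < x := hy.trans_le hyx
  rw [hreindex, geom_sum_eq hx.ne', div_eq_inv_mul]
  gcongr
  · linarith [one_le_pow₀ (n := n) hx.le]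
  · linarith

theorem sum_Icc_exp_mul_sub_le {a b : ℝ} (hb : 0 < b) (hba : b ≤ a) (n : ℕ) :
    ∑ j ∈ Finset.Icc 1 n, Real.exp (a * (n - j : ℕ)) ≤ (Real.exp b - 1)⁻¹ * Real.exp (a * n) := by
  simp only [mul_comm a, Real.exp_nat_mul]
  exact sum_Icc_pow_sub_le (Real.one_lt_exp_iff.mpr hb) (Real.exp_le_exp.mpr hba) n

theorem graphTransform_growth_integrated_general {Ω : Type*} {m : ℕ} [MeasurableSpace Ω]
    (μ : Measure Ω) [IsProbabilityMeasure μ]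
    (f : Ω → Ω) (hf : MeasurePreserving f μ μ)
    (G : Ω → Matrix.GeneralLinearGroup (Fin m) ℝ)
    (E : Ω → Submodule ℝ (Fin m → ℝ))
    (lam ε : ℝ) (hε0 : 0 < ε) (hεlam : ε < lam)
    (C : Ω → ℝ) (hC1 : ∀ ω : Ω, 1 ≤ C ω)
    (hCL2 : MemLp C 2 μ)
    (hbound : ∀ᵐ ω ∂μ, ∀ n : ℕ,
      (∀ v ∈ E ω,
        ‖((matCocycle f G n ω : Matrix (Fin m) (Fin m) ℝ)).mulVec v‖
          ≤ C ω * Real.exp ((lam + ε) * n) * ‖v‖) ∧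
      (∀ v ∈ E (f^[n] ω),
        ‖(((matCocycle f G n ω)⁻¹ : Matrix (Fin m) (Fin m) ℝ)).mulVec v‖
          ≤ C ω * Real.exp (-(lam - ε) * n) * ‖v‖))
    (d : Ω → (Fin m → ℝ)) (hdE : ∀ ω' : Ω, d ω' ∈ E ω')
    (Dinf : ℝ) (hDinf : ∀ ω' : Ω, ‖d ω'‖ ≤ Dinf) :
    ∀ n : ℕ, 1 ≤ n →
      ∫ ω, ‖graphTransform f G d n ω‖ ∂μ
        ≤ (∫ ω, (C ω) ^ 2 ∂μ) * Dinf * (Real.exp (lam - ε) - 1)⁻¹ *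
            Real.exp ((lam + ε) * n) := by
  intro n _
  have hD0 : 0 ≤ Dinf := (norm_nonneg _).trans (hDinf (nonempty_of_isProbabilityMeasure μ).some)
  have hC0 (ω : Ω) : 0 ≤ C ω := zero_le_one.trans (hC1 ω)
  have hCint : Integrable C μ := hCL2.integrable one_le_two
  have hpointwise := ae_norm_graphTransform_le (w := fun k : ℕ => Real.exp ((lam + ε) * k))
    hf.quasiMeasurePreserving hC0 (fun _ => (Real.exp_pos _).le)
    (hbound.mono fun _ h k => (h k).1) hdE hDinf n
  calc ∫ ω, ‖graphTransform f G d n ω‖ ∂μ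
      ≤ ∫ ω, ∑ j ∈ Finset.Icc 1 n,
          C (f^[j] ω) * (Real.exp ((lam + ε) * (n - j : ℕ)) * Dinf) ∂μ :=
        integral_mono_of_nonneg (.of_forall fun _ => norm_nonneg _)
          (integrable_sum_comp_iterate_mul hf hCint _ _) hpointwise
    _ = (∫ ω, C ω ∂μ) * (∑ j ∈ Finset.Icc 1 n, Real.exp ((lam + ε) * (n - j : ℕ))) * Dinf := by
        rw [integral_sum_comp_iterate_mul hf hCint, ← Finset.sum_mul, mul_assoc]
    _ ≤ (∫ ω, C ω ^ 2 ∂μ) * ((Real.exp (lam - ε) - 1)⁻¹ * Real.exp ((lam + ε) * n)) * Dinf := by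
        gcongr ?_ * ?_ * _
        · exact integral_le_integral_sq_of_one_le hC1 hCL2
        · exact sum_Icc_exp_mul_sub_le (by linarith) (by linarith) n
    _ = _ := by ring

/-- integrated (L¹) growth bound for the graph transform under
the hypothesis of L² Pesin sets (square-integrable non-uniform hyperbolicity
constant C(ω)): ∫‖Ψⁿd‖ dμ ≤ ‖C‖²_{L²(μ)} D∞ (e^{λ−ε} − 1)⁻¹ e^{(λ+ε)n}. -/
theorem graphTransform_growth_integrated {Ω : Type*} {m : ℕ} [MeasurableSpace Ω]
    (μ : Measure Ω) [IsProbabilityMeasure μ]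
    (f : Ω → Ω) (hf : MeasurePreserving f μ μ)
    (G : Ω → Matrix.GeneralLinearGroup (Fin m) ℝ)
    (hG : ∀ i j : Fin m, Measurable fun ω => (G ω : Matrix (Fin m) (Fin m) ℝ) i j)
    (E : Ω → Submodule ℝ (Fin m → ℝ))
    (hE : ∀ ω' : Ω,
      Submodule.map ((G ω' : Matrix (Fin m) (Fin m) ℝ)).mulVecLin (E ω') = E (f ω'))
    (lam ε : ℝ) (hlam : 0 < lam) (hε0 : 0 < ε) (hεlam : ε < lam)
    (C : Ω → ℝ) (hC1 : ∀ ω : Ω, 1 ≤ C ω) (hCmeas : Measurable C)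
    (hCL2 : MemLp C 2 μ)
    (hbound : ∀ᵐ ω ∂μ, ∀ n : ℕ,
      (∀ v ∈ E ω,
        ‖((matCocycle f G n ω : Matrix (Fin m) (Fin m) ℝ)).mulVec v‖
          ≤ C ω * Real.exp ((lam + ε) * n) * ‖v‖) ∧
      (∀ v ∈ E (f^[n] ω),
        ‖(((matCocycle f G n ω)⁻¹ : Matrix (Fin m) (Fin m) ℝ)).mulVec v‖
          ≤ C ω * Real.exp (-(lam - ε) * n) * ‖v‖))
    (d : Ω → (Fin m → ℝ)) (hd : Measurable d) (hdE : ∀ ω' : Ω, d ω' ∈ E ω')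
    (Dinf : ℝ) (hDinf : ∀ ω' : Ω, ‖d ω'‖ ≤ Dinf) :
    ∀ n : ℕ, 1 ≤ n →
      ∫ ω, ‖graphTransform f G d n ω‖ ∂μ
        ≤ (∫ ω, (C ω) ^ 2 ∂μ) * Dinf * (Real.exp (lam - ε) - 1)⁻¹ *
            Real.exp ((lam + ε) * n) :=
  graphTransform_growth_integrated_general μ f hf G E lam ε hε0 hεlam C hC1 hCL2 hbound d hdE Dinf
    hDinf
end

section
/- Let f: ℝ^m → ℝ^m, g: ℝ^N → ℝ^N and J: ℝ^m → ℝ^N be C¹ maps with g ∘ J = J ∘ f. Let K ⊆ ℝ^m be a compact set with f(K) ⊆ K, and suppose the derivative DJ(x) is injective for every x ∈ K. Then there exist constants 0 < c ≤ C such that for every x ∈ K, every n ∈ ℕ and every v ∈ ℝ^m: c ‖Dfⁿ(x) v‖ ≤ ‖D(gⁿ)(J(x)) (DJ(x) v)‖ ≤ C ‖Dfⁿ(x) v‖. In particular, if for some x ∈ K and v ≠ 0 the limit λ = lim_{n→∞} (1/n) ln ‖Dfⁿ(x) v‖ exists, then lim_{n→∞} (1/n) ln ‖D(gⁿ)(J(x))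 (DJ(x) v)‖ = λ; that is, every Lyapunov exponent of f along the orbit of x is also a Lyapunov exponent of g along the orbit of J(x). -/
/-!
Differentiating the iterated conjugacy `gⁿ ∘ J = J ∘ fⁿ` gives
`D(gⁿ)(J x) (DJ(x) v) = DJ(fⁿ x) (Dfⁿ(x) v)`, and `fⁿ x` stays in `K`. So it suffices to bound
`DJ` uniformly on `K`: from above by continuity, from below by minimising `‖DJ(y) u‖` over the
compact set `K × (unit sphere)`, where it is positive by injectivity. Comparable norms have
logarithms at bounded distance, and that distance vanishes after division by `n`.
-/

open Filter Topology

section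

variable {𝕜 E F : Type*} [NontriviallyNormedField 𝕜] [NormedAddCommGroup E] [NormedSpace 𝕜 E]
  [NormedAddCommGroup F] [NormedSpace 𝕜 F]

theorem Function.Semiconj.fderiv_apply_fderiv {J : E → F} {f : E → E} {g : F → F}
    (h : Function.Semiconj J f g) {x : E} (hJx : DifferentiableAt 𝕜 J x)
    (hJfx : DifferentiableAt 𝕜 J (f x)) (hf : DifferentiableAt 𝕜 f x)
    (hg : DifferentiableAt 𝕜 g (J x)) (v : E) :
    fderiv 𝕜 g (J x) (fderiv 𝕜 J x v) = fderiv 𝕜 J (f x) (fderiv 𝕜 f x v) := by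
  rw [← ContinuousLinearMap.comp_apply, ← fderiv_comp x hg hJx, ← h.comp_eq,
    fderiv_comp x hJfx hf, ContinuousLinearMap.comp_apply]

theorem Function.Semiconj.fderiv_iterate_apply_fderiv {J : E → F} {f : E → E} {g : F → F}
    (h : Function.Semiconj J f g) (hJ : Differentiable 𝕜 J) (hf : Differentiable 𝕜 f)
    (hg : Differentiable 𝕜 g) (n : ℕ) (x v : E) :
    fderiv 𝕜 (g^[n]) (J x) (fderiv 𝕜 J x v) = fderiv 𝕜 J (f^[n] x) (fderiv 𝕜 (f^[n]) x v) :=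
  (h.iterate_right n).fderiv_apply_fderiv (hJ x) (hJ _) (hf.iterate n x) (hg.iterate n _) v

end

theorem IsCompact.exists_pos_mul_norm_le_norm_apply {X E F : Type*} [TopologicalSpace X]
    [NormedAddCommGroup E] [NormedSpace ℝ E] [FiniteDimensional ℝ E]
    [NormedAddCommGroup F] [NormedSpace ℝ F] {K : Set X} (hK : IsCompact K)
    {L : X → E →L[ℝ] F} (hL : ContinuousOn L K) (hinj : ∀ x ∈ K, Function.Injective (L x)) :
    ∃ c > 0, ∀ x ∈ K, ∀ v, c * ‖v‖ ≤ ‖L x v‖ := by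
  have hcont : ContinuousOn (fun p : X × E => ‖L p.1 p.2‖) (K ×ˢ Metric.sphere 0 1) :=
    ((hL.comp continuousOn_fst fun _ hp => hp.1).clm_apply continuousOn_snd).norm
  have hpos : ∀ p ∈ K ×ˢ Metric.sphere (0 : E) 1, 0 < ‖L p.1 p.2‖ := by
    rintro ⟨x, u⟩ ⟨hx, hu⟩
    refine norm_pos_iff.2 fun h0 => ?_
    have hu0 : u = 0 := hinj x hx (h0.trans (map_zero (L x)).symm)
    simp [hu0] at hu
  obtain ⟨c, hc, hmin⟩ := (hK.prod (isCompact_sphere 0 1)).exists_forall_le' hcont hpos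
  refine ⟨c, hc, fun x hx v => ?_⟩
  rcases eq_or_ne v 0 with rfl | hv
  · simp
  have hv' : 0 < ‖v‖ := norm_pos_iff.2 hv
  have hunit := hmin (x, ‖v‖⁻¹ • v) ⟨hx, by simp [norm_smul, hv'.ne']⟩
  rw [map_smul, norm_smul, norm_inv, norm_norm] at hunit
  calc c * ‖v‖ ≤ ‖v‖⁻¹ * ‖L x v‖ * ‖v‖ := by gcongr
    _ = ‖L x v‖ := by field_simp

theorem abs_log_sub_log_le_of_mul_le_of_le_mul {a b c C : ℝ} (hc : 0 < c) (ha : 0 ≤ a)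
    (hlo : c * a ≤ b) (hhi : b ≤ C * a) :
    |Real.log b - Real.log a| ≤ max |Real.log c| |Real.log C| := by
  rcases ha.eq_or_lt with rfl | ha
  · have hb : b = 0 := le_antisymm (by simpa using hhi) (by simpa using hlo)
    simp [hb]
  have hb : 0 < b := lt_of_lt_of_le (by positivity) hlo
  rw [← Real.log_div hb.ne' ha.ne', abs_le]
  constructor
  · calc -max |Real.log c| |Real.log C| ≤ Real.log c := by
          linarith [neg_abs_le (Real.log c), le_max_left |Real.log c| |Real.log C|]
      _ ≤ Real.log (b / a) := Real.log_le_log hc ((le_div_iff₀ ha).2 hlo)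
  · calc Real.log (b / a) ≤ Real.log C := Real.log_le_log (div_pos hb ha) ((div_le_iff₀ ha).2 hhi)
      _ ≤ max |Real.log c| |Real.log C| := (le_abs_self _).trans (le_max_right _ _)

theorem Filter.Tendsto.inv_mul_log_of_mul_le_of_le_mul {a b : ℕ → ℝ} {c C lam : ℝ} (hc : 0 < c)
    (ha : ∀ n, 0 ≤ a n) (hlo : ∀ n, c * a n ≤ b n) (hhi : ∀ n, b n ≤ C * a n)
    (h : Tendsto (fun n : ℕ => (1 / n : ℝ) * Real.log (a n)) atTop (𝓝 lam)) :
    Tendsto (fun n : ℕ => (1 / n : ℝ) * Real.log (b n)) atTop (𝓝 lam) := by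
  set M := max |Real.log c| |Real.log C|
  have hdiff :
      Tendsto (fun n : ℕ => (1 / n : ℝ) * (Real.log (b n) - Real.log (a n))) atTop (𝓝 0) := by
    refine squeeze_zero_norm (fun n => ?_)
      (by simpa using tendsto_one_div_atTop_nhds_zero_nat.mul_const M)
    rw [norm_mul, Real.norm_eq_abs, Real.norm_eq_abs, abs_of_nonneg (by positivity), one_div]
    exact mul_le_mul_of_nonneg_left
      (abs_log_sub_log_le_of_mul_le_of_le_mul hc (ha n) (hlo n) (hhi n)) (by positivity)
  simpa [mul_sub] using hdiff.add h

/-- Dechert–Gencay: if g ∘ J = J ∘ f with f, g, J of class C¹,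
K compact and f-invariant, and DJ injective on K, then the derivatives of the
iterates of g along J-images are uniformly comparable to those of f; in
particular the Lyapunov exponents of f along orbits in K are Lyapunov
exponents of g along the corresponding J-orbits. -/
theorem conjugacy_preserves_Lyapunov_exponents {m N : ℕ}
    (f : EuclideanSpace ℝ (Fin m) → EuclideanSpace ℝ (Fin m))
    (g : EuclideanSpace ℝ (Fin N) → EuclideanSpace ℝ (Fin N))
    (J : EuclideanSpace ℝ (Fin m) → EuclideanSpace ℝ (Fin N))
    (hf : ContDiff ℝ 1 f) (hg : ContDiff ℝ 1 g) (hJ : ContDiff ℝ 1 J)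
    (hconj : g ∘ J = J ∘ f)
    (K : Set (EuclideanSpace ℝ (Fin m))) (hK : IsCompact K) (hfK : f '' K ⊆ K)
    (hDJ : ∀ x ∈ K, Function.Injective (fderiv ℝ J x)) :
    ∃ c C : ℝ, 0 < c ∧ c ≤ C ∧
      (∀ x ∈ K, ∀ (n : ℕ) (v : EuclideanSpace ℝ (Fin m)),
        c * ‖fderiv ℝ (f^[n]) x v‖ ≤ ‖fderiv ℝ (g^[n]) (J x) (fderiv ℝ J x v)‖ ∧
        ‖fderiv ℝ (g^[n]) (J x) (fderiv ℝ J x v)‖ ≤ C * ‖fderiv ℝ (f^[n]) x v‖) ∧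
      (∀ x ∈ K, ∀ v : EuclideanSpace ℝ (Fin m), v ≠ 0 → ∀ lam : ℝ,
        Tendsto (fun n : ℕ => (1 / n : ℝ) * Real.log ‖fderiv ℝ (f^[n]) x v‖)
          atTop (nhds lam) →
        Tendsto (fun n : ℕ =>
            (1 / n : ℝ) * Real.log ‖fderiv ℝ (g^[n]) (J x) (fderiv ℝ J x v)‖)
          atTop (nhds lam)) := by
  have hDJcont := (hJ.continuous_fderiv one_ne_zero).continuousOn (s := K)
  obtain ⟨c, hc, hlow⟩ := hK.exists_pos_mul_norm_le_norm_apply hDJcont hDJ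
  obtain ⟨C, hC⟩ := hK.exists_bound_of_continuousOn hDJcont
  have hchain := (Function.semiconj_iff_comp_eq.2 hconj.symm).fderiv_iterate_apply_fderiv
    (hJ.differentiable one_ne_zero) (hf.differentiable one_ne_zero) (hg.differentiable one_ne_zero)
  have horbit := (Set.mapsTo_iff_image_subset.2 hfK).iterate
  have hbounds : ∀ x ∈ K, ∀ (n : ℕ) (v : EuclideanSpace ℝ (Fin m)),
      c * ‖fderiv ℝ (f^[n]) x v‖ ≤ ‖fderiv ℝ (g^[n]) (J x) (fderiv ℝ J x v)‖ ∧
      ‖fderiv ℝ (g^[n]) (J x) (fderiv ℝ J x v)‖ ≤ max C c * ‖fderiv ℝ (f^[n]) x v‖ := by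
    intro x hx n v
    rw [hchain]
    exact ⟨hlow _ (horbit n hx) _, (ContinuousLinearMap.le_opNorm _ _).trans
      (by gcongr; exact (hC _ (horbit n hx)).trans (le_max_left _ _))⟩
  refine ⟨c, max C c, hc, le_max_right _ _, hbounds, fun x hx v _ lam h => ?_⟩
  exact h.inv_mul_log_of_mul_le_of_le_mul hc (fun _ => norm_nonneg _)
    (fun n => (hbounds x hx n v).1) (fun n => (hbounds x hx n v).2)
end

section
/- Let Ω be a set, f: Ω → Ω, φ: Ω → ℝ^d, and Φ: Ω → ℝ^L injective, and let g: ℝ^d × ℝ^L → ℝ^L satisfy Φ(f(ω)) = g(φ(ω), Φ(ω)) for all ω ∈ Ω and be 1-Lipschitz in the norm ‖(u, y)‖ := ‖u‖ + ‖y‖, i.e., ‖g(u, y) − g(u', y')‖ ≤ ‖u − u'‖ + ‖y − y'‖ for all u, u', y, y'. Let r: ℝ^L → Φ(Ω) be a retraction (r(Φ(ω)) = Φ(ω) for all ω) that is κ-Lipschitz, κ ≥ 0. Define h := (φ, Φ), X := h(Ω), the extended feedback w̄ := (φ ∘ f) ∘ Φ^{−1} ∘ r : ℝ^L → ℝ^d,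 and 𝒯(u, y) := (w̄(y), g(u, y)). Fix ω₀ ∈ Ω and a constant C₀ ≥ 0 such that ‖φ(ω') − φ(ω₀)‖ ≤ C₀ ‖Φ(ω') − Φ(ω₀)‖ for all ω' ∈ Ω. Set z₀ := h(ω₀), and for δ₀ ∈ ℝ^L let z₀' := (φ(ω₀), Φ(ω₀) + δ₀). Then, setting ω₀' := Φ^{−1}(r(Φ(ω₀) + δ₀)), z₀'' := h(ω₀') ∈ X and z₁ := h(f(ω₀')) ∈ X, one has (measuring distances in ℝ^d × ℝ^L with the norm ‖(u, y)‖ = ‖u‖ + ‖y‖): (i) z₁ = 𝒯(z₀'') and ‖z₀'' − z₀‖ ≤ (1 + C₀) κ ‖δ₀‖; (ii) proj₁(𝒯(z₀')) = proj₁(z₁), i.e., 𝒯(z₀') is a Φ-perturbation of z₁, with ‖𝒯(z₀') − z₁‖ ≤ (1 + (1 + C₀) κ) ‖δ₀‖. -/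
/-!
Pulling the perturbed observation `Φ ω₀ + δ₀` back through the retraction gives a genuine state
`ω₀'` with `‖Φ ω₀' - Φ ω₀‖ ≤ κ ‖δ₀‖`, and the comparison constant `C₀` extends this to the whole
observation `h ω₀'`. Because `w̄ ∘ Φ = φ ∘ f` and `Φ ∘ f = g ∘ h`, the true step from `ω₀'` is a step
of `𝒯`. Both `𝒯 z₀'` and `z₁` have first coordinate `w̄ (Φ ω₀ + δ₀)`, and their second coordinates
differ by at most the `1`-Lipschitz bound of `g`.
-/

open Function

section Retraction

variable {Ω E : Type*} [Nonempty Ω] {Φ : Ω → E} {r : E → E}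

theorem apply_invFun_retraction (hr_range : ∀ y, r y ∈ Set.range Φ) (y : E) :
    Φ (invFun Φ (r y)) = r y :=
  invFun_eq (hr_range y)

theorem invFun_retraction_apply_self (hΦ : Injective Φ) (hr_retract : ∀ ω, r (Φ ω) = Φ ω)
    (ω : Ω) : invFun Φ (r (Φ ω)) = ω := by
  rw [hr_retract, leftInverse_invFun hΦ ω]

end Retraction

section Norms

variable {E F G : Type*} [SeminormedAddCommGroup E] [SeminormedAddCommGroup F]
  [SeminormedAddCommGroup G]

theorem norm_map_add_sub_le_of_isFixedPt {r : E → E} {κ : ℝ}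
    (hr_lip : ∀ y y', ‖r y - r y'‖ ≤ κ * ‖y - y'‖) {x : E} (hx : IsFixedPt r x) (δ : E) :
    ‖r (x + δ) - x‖ ≤ κ * ‖δ‖ := by
  simpa [hx.eq] using hr_lip (x + δ) x

theorem norm_add_sub_le_norm_add_norm_sub (x x' δ : E) : ‖x + δ - x'‖ ≤ ‖δ‖ + ‖x' - x‖ := by
  calc ‖x + δ - x'‖ = ‖δ - (x' - x)‖ := by congr 1; abel
    _ ≤ ‖δ‖ + ‖x' - x‖ := norm_sub_le _ _

theorem norm_apply_add_sub_le {g : F × E → G}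
    (hg_lip : ∀ u u' y y', ‖g (u, y) - g (u', y')‖ ≤ ‖u - u'‖ + ‖y - y'‖) (u u' : F) (x x' δ : E) :
    ‖g (u, x + δ) - g (u', x')‖ ≤ ‖δ‖ + (‖u' - u‖ + ‖x' - x‖) := by
  calc ‖g (u, x + δ) - g (u', x')‖ ≤ ‖u - u'‖ + ‖x + δ - x'‖ := hg_lip _ _ _ _
    _ ≤ ‖u' - u‖ + (‖δ‖ + ‖x' - x‖) := by
      rw [norm_sub_rev u]
      gcongr
      exact norm_add_sub_le_norm_add_norm_sub x x' δ
    _ = ‖δ‖ + (‖u' - u‖ + ‖x' - x‖) := by ring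

theorem norm_sub_add_norm_sub_le_of_le_mul {Ω : Type*} {φ : Ω → F} {Φ : Ω → E} {ω₀ : Ω}
    {C₀ : ℝ} (hC : ∀ ω', ‖φ ω' - φ ω₀‖ ≤ C₀ * ‖Φ ω' - Φ ω₀‖) (ω' : Ω) :
    ‖φ ω' - φ ω₀‖ + ‖Φ ω' - Φ ω₀‖ ≤ (1 + C₀) * ‖Φ ω' - Φ ω₀‖ := by
  linarith [hC ω']

end Norms

theorem one_step_perturbation_general {Ω : Type*} [Nonempty Ω] {d L : ℕ}
    (f : Ω → Ω) (φ : Ω → (Fin d → ℝ)) (Φ : Ω → (Fin L → ℝ))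
    (hΦ : Function.Injective Φ)
    (g : (Fin d → ℝ) × (Fin L → ℝ) → (Fin L → ℝ))
    (hg_inv : ∀ ω : Ω, Φ (f ω) = g (φ ω, Φ ω))
    (hg_lip : ∀ (u u' : Fin d → ℝ) (y y' : Fin L → ℝ),
      ‖g (u, y) - g (u', y')‖ ≤ ‖u - u'‖ + ‖y - y'‖)
    (r : (Fin L → ℝ) → (Fin L → ℝ)) (κ : ℝ)
    (hr_range : ∀ y : Fin L → ℝ, r y ∈ Set.range Φ)
    (hr_retract : ∀ ω : Ω, r (Φ ω) = Φ ω)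
    (hr_lip : ∀ y y' : Fin L → ℝ, ‖r y - r y'‖ ≤ κ * ‖y - y'‖)
    (ω₀ : Ω) (C₀ : ℝ) (hC₀ : 0 ≤ C₀)
    (hC : ∀ ω' : Ω, ‖φ ω' - φ ω₀‖ ≤ C₀ * ‖Φ ω' - Φ ω₀‖)
    (δ₀ : Fin L → ℝ) :
    let wbar : (Fin L → ℝ) → (Fin d → ℝ) := fun y => φ (f (Function.invFun Φ (r y)))
    let T : (Fin d → ℝ) × (Fin L → ℝ) → (Fin d → ℝ) × (Fin L → ℝ) :=
      fun z => (wbar z.2, g z)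
    let z₀ : (Fin d → ℝ) × (Fin L → ℝ) := (φ ω₀, Φ ω₀)
    let z₀' : (Fin d → ℝ) × (Fin L → ℝ) := (φ ω₀, Φ ω₀ + δ₀)
    let ω₀' : Ω := Function.invFun Φ (r (Φ ω₀ + δ₀))
    let z₀'' : (Fin d → ℝ) × (Fin L → ℝ) := (φ ω₀', Φ ω₀')
    let z₁ : (Fin d → ℝ) × (Fin L → ℝ) := (φ (f ω₀'), Φ (f ω₀'))
    (z₁ = T z₀'' ∧
      ‖z₀''.1 - z₀.1‖ + ‖z₀''.2 - z₀.2‖ ≤ (1 + C₀) * κ * ‖δ₀‖) ∧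
    ((T z₀').1 = z₁.1 ∧
      ‖(T z₀').1 - z₁.1‖ + ‖(T z₀').2 - z₁.2‖ ≤ (1 + (1 + C₀) * κ) * ‖δ₀‖) := by
  intro wbar T z₀ z₀' ω₀' z₀'' z₁
  have hΦ_close : ‖Φ ω₀' - Φ ω₀‖ ≤ κ * ‖δ₀‖ := by
    rw [apply_invFun_retraction hr_range]
    exact norm_map_add_sub_le_of_isFixedPt hr_lip (hr_retract ω₀) δ₀
  have hz₀''_close : ‖φ ω₀' - φ ω₀‖ + ‖Φ ω₀' - Φ ω₀‖ ≤ (1 + C₀) * κ * ‖δ₀‖ := by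
    rw [mul_assoc]
    exact (norm_sub_add_norm_sub_le_of_le_mul hC ω₀').trans (by gcongr)
  have hz₁ : z₁ = T z₀'' := by
    simp only [z₁, T, z₀'', wbar, invFun_retraction_apply_self hΦ hr_retract, ← hg_inv]
  have hfeedback : (T z₀').1 = z₁.1 := rfl
  refine ⟨⟨hz₁, hz₀''_close⟩, hfeedback, ?_⟩
  rw [hfeedback, sub_self, norm_zero, zero_add]
  calc ‖g (φ ω₀, Φ ω₀ + δ₀) - Φ (f ω₀')‖
      ≤ ‖δ₀‖ + (‖φ ω₀' - φ ω₀‖ + ‖Φ ω₀' - Φ ω₀‖) := by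
        rw [hg_inv]
        exact norm_apply_add_sub_le hg_lip _ _ _ _ _
    _ ≤ (1 + (1 + C₀) * κ) * ‖δ₀‖ := by linarith

/-- one-step perturbation lemma for the reconstructed system
𝒯(u, y) = (w̄(y), g(u, y)) with extended feedback w̄ = (φ ∘ f) ∘ Φ⁻¹ ∘ r.
Distances in ℝ^d × ℝ^L are measured in the norm ‖(u, y)‖ = ‖u‖ + ‖y‖. -/
theorem one_step_perturbation {Ω : Type*} [Nonempty Ω] {d L : ℕ}
    (f : Ω → Ω) (φ : Ω → (Fin d → ℝ)) (Φ : Ω → (Fin L → ℝ))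
    (hΦ : Function.Injective Φ)
    (g : (Fin d → ℝ) × (Fin L → ℝ) → (Fin L → ℝ))
    (hg_inv : ∀ ω : Ω, Φ (f ω) = g (φ ω, Φ ω))
    (hg_lip : ∀ (u u' : Fin d → ℝ) (y y' : Fin L → ℝ),
      ‖g (u, y) - g (u', y')‖ ≤ ‖u - u'‖ + ‖y - y'‖)
    (r : (Fin L → ℝ) → (Fin L → ℝ)) (κ : ℝ) (hκ : 0 ≤ κ)
    (hr_range : ∀ y : Fin L → ℝ, r y ∈ Set.range Φ)
    (hr_retract : ∀ ω : Ω, r (Φ ω) = Φ ω)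
    (hr_lip : ∀ y y' : Fin L → ℝ, ‖r y - r y'‖ ≤ κ * ‖y - y'‖)
    (ω₀ : Ω) (C₀ : ℝ) (hC₀ : 0 ≤ C₀)
    (hC : ∀ ω' : Ω, ‖φ ω' - φ ω₀‖ ≤ C₀ * ‖Φ ω' - Φ ω₀‖)
    (δ₀ : Fin L → ℝ) :
    let wbar : (Fin L → ℝ) → (Fin d → ℝ) := fun y => φ (f (Function.invFun Φ (r y)))
    let T : (Fin d → ℝ) × (Fin L → ℝ) → (Fin d → ℝ) × (Fin L → ℝ) :=
      fun z => (wbar z.2, g z)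
    let z₀ : (Fin d → ℝ) × (Fin L → ℝ) := (φ ω₀, Φ ω₀)
    let z₀' : (Fin d → ℝ) × (Fin L → ℝ) := (φ ω₀, Φ ω₀ + δ₀)
    let ω₀' : Ω := Function.invFun Φ (r (Φ ω₀ + δ₀))
    let z₀'' : (Fin d → ℝ) × (Fin L → ℝ) := (φ ω₀', Φ ω₀')
    let z₁ : (Fin d → ℝ) × (Fin L → ℝ) := (φ (f ω₀'), Φ (f ω₀'))
    (z₁ = T z₀'' ∧
      ‖z₀''.1 - z₀.1‖ + ‖z₀''.2 - z₀.2‖ ≤ (1 + C₀) * κ * ‖δ₀‖) ∧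
    ((T z₀').1 = z₁.1 ∧
      ‖(T z₀').1 - z₁.1‖ + ‖(T z₀').2 - z₁.2‖ ≤ (1 + (1 + C₀) * κ) * ‖δ₀‖) :=
  one_step_perturbation_general f φ Φ hΦ g hg_inv hg_lip r κ hr_range hr_retract hr_lip ω₀ C₀ hC₀ hC
    δ₀
end

section
/- Let Ω be a set, f: Ω → Ω, φ: Ω → ℝ^d, and Φ: Ω → ℝ^L injective, and let g: ℝ^d × ℝ^L → ℝ^L satisfy Φ(f(ω)) = g(φ(ω), Φ(ω)) for all ω ∈ Ω and be 1-Lipschitz in the norm ‖(u, y)‖ := ‖u‖ + ‖y‖. Let r: ℝ^L → Φ(Ω) be a κ-Lipschitz retraction (r(Φ(ω)) = Φ(ω) for all ω), and let C: Ω → [0, ∞) satisfy ‖φ(ω') − φ(ω)‖ ≤ C(ω) ‖Φ(ω') − Φ(ω)‖ for all ω, ω' ∈ Ω. Define h := (φ, Φ), w̄ := (φ ∘ f) ∘ Φ^{−1} ∘ r, and 𝒯(u, y) := (w̄(y), g(u, y)). Fix ω₀ ∈ Ω, δ₀ ∈ ℝ^L, and set z₀' := (φ(ω₀), Φ(ω₀)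 + δ₀). Then there exists a sequence (ω_n)_{n≥0} in Ω with the given ω₀ as its first term such that, writing z_n := h(ω_n), δ_n := proj₂(𝒯ⁿ(z₀')) − Φ(ω_n), and C̃(ω) := (1 + C(ω)) κ, the following hold for all n ≥ 0: (i) proj₁(𝒯ⁿ(z₀')) = proj₁(z_n), i.e., 𝒯ⁿ(z₀') is a Φ-perturbation of z_n; (ii) ω_{n+1} = f(Φ^{−1}(r(Φ(ω_n) + δ_n))); (iii) ‖δ_{n+1}‖ ≤ (1 + C̃(ω_n)) ‖δ_n‖, hence ‖δ_n‖ ≤ ‖δ₀‖ ∏_{i=0}^{n−1} (1 + C̃(ω_i)); and (iv) the points z_n'' := h(Φ^{−1}(r(Φ(ω_n) + δ_n))) ∈ h(Ω) satisfy ‖z_n'' − z_n‖ ≤ C̃(ω_n) ‖δ_n‖ ≤ ‖δ₀‖ C̃(ω_n) ∏_{i=0}^{n−1} (1 + C̃(ω_i)). -/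
/-!
Write `σ y := Φ⁻¹(r y)` and `δₙ := yₙ - Φ(ωₙ)` for the second coordinate `yₙ` of the orbit. Since `r`
fixes `Φ(ωₙ)` and is `κ`-Lipschitz, `Φ(σ yₙ)` lies within `κ‖δₙ‖` of `Φ(ωₙ)`, and then `φ(σ yₙ)`
within `C(ωₙ)κ‖δₙ‖` of `φ(ωₙ)`. Setting `ωₙ₊₁ := f(σ yₙ)`, the conjugacy `Φ ∘ f = g ∘ h` gives
`Φ(ωₙ₊₁) = g(φ(σ yₙ), r yₙ)` while `yₙ₊₁ = g(φ(ωₙ), yₙ)`, so the 1-Lipschitz bound on `g` yields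
`‖δₙ₊₁‖ ≤ C(ωₙ)κ‖δₙ‖ + ‖yₙ - r yₙ‖ ≤ (1 + (1 + C(ωₙ))κ)‖δₙ‖`.
-/

open Finset

theorem le_mul_prod_range_of_le_mul {a b : ℕ → ℝ} (hb : ∀ n, 0 ≤ b n)
    (h : ∀ n, a (n + 1) ≤ b n * a n) (n : ℕ) : a n ≤ a 0 * ∏ i ∈ range n, b i := by
  induction n with
  | zero => simp
  | succ n ih =>
    calc a (n + 1) ≤ b n * a n := h n
      _ ≤ b n * (a 0 * ∏ i ∈ range n, b i) := mul_le_mul_of_nonneg_left ih (hb n)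
      _ = a 0 * ∏ i ∈ range (n + 1), b i := by rw [prod_range_succ]; ring

section Retraction

variable {Ω E F : Type*} [SeminormedAddCommGroup E] [SeminormedAddCommGroup F]
  {φ : Ω → E} {Φ : Ω → F} {r : F → F} {σ : F → Ω} {κ : ℝ} {C : Ω → ℝ}

theorem norm_snd_sub_le_of_retract (hσ : ∀ y, Φ (σ y) = r y)
    (hr_retract : ∀ ω, r (Φ ω) = Φ ω) (hr_lip : ∀ y y', ‖r y - r y'‖ ≤ κ * ‖y - y'‖)
    (y : F) (ω : Ω) : ‖Φ (σ y) - Φ ω‖ ≤ κ * ‖y - Φ ω‖ :=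
  calc ‖Φ (σ y) - Φ ω‖ = ‖r y - r (Φ ω)‖ := by rw [hσ, hr_retract]
    _ ≤ κ * ‖y - Φ ω‖ := hr_lip _ _

theorem norm_sub_retract_self_le (hr_retract : ∀ ω, r (Φ ω) = Φ ω)
    (hr_lip : ∀ y y', ‖r y - r y'‖ ≤ κ * ‖y - y'‖) (y : F) (ω : Ω) :
    ‖y - r y‖ ≤ (1 + κ) * ‖y - Φ ω‖ :=
  calc ‖y - r y‖ = ‖(y - Φ ω) + (r (Φ ω) - r y)‖ := by rw [hr_retract]; abel_nf
    _ ≤ ‖y - Φ ω‖ + κ * ‖Φ ω - y‖ := norm_add_le_of_le le_rfl (hr_lip _ _)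
    _ = (1 + κ) * ‖y - Φ ω‖ := by rw [norm_sub_rev (Φ ω)]; ring

variable (hσ : ∀ y, Φ (σ y) = r y) (hr_retract : ∀ ω, r (Φ ω) = Φ ω)
  (hr_lip : ∀ y y', ‖r y - r y'‖ ≤ κ * ‖y - y'‖) (hC0 : ∀ ω, 0 ≤ C ω)
  (hC : ∀ ω ω', ‖φ ω' - φ ω‖ ≤ C ω * ‖Φ ω' - Φ ω‖)
include hσ hr_retract hr_lip hC0 hC

theorem norm_fst_sub_le_of_retract (y : F) (ω : Ω) :
    ‖φ (σ y) - φ ω‖ ≤ C ω * (κ * ‖y - Φ ω‖) :=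
  (hC _ _).trans <|
    mul_le_mul_of_nonneg_left (norm_snd_sub_le_of_retract hσ hr_retract hr_lip y ω) (hC0 ω)

theorem norm_add_norm_snd_sub_le_of_retract (y : F) (ω : Ω) :
    ‖φ (σ y) - φ ω‖ + ‖Φ (σ y) - Φ ω‖ ≤ (1 + C ω) * κ * ‖y - Φ ω‖ := by
  have := add_le_add (norm_fst_sub_le_of_retract hσ hr_retract hr_lip hC0 hC y ω)
    (norm_snd_sub_le_of_retract hσ hr_retract hr_lip y ω)
  linarith

theorem norm_step_sub_le_of_retract {f : Ω → Ω} {g : E × F → F}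
    (hg_inv : ∀ ω, Φ (f ω) = g (φ ω, Φ ω))
    (hg_lip : ∀ u u' y y', ‖g (u, y) - g (u', y')‖ ≤ ‖u - u'‖ + ‖y - y'‖) (y : F) (ω : Ω) :
    ‖g (φ ω, y) - Φ (f (σ y))‖ ≤ (1 + (1 + C ω) * κ) * ‖y - Φ ω‖ := by
  have hφ := norm_fst_sub_le_of_retract hσ hr_retract hr_lip hC0 hC y ω
  have hy := norm_sub_retract_self_le hr_retract hr_lip y ω
  calc ‖g (φ ω, y) - Φ (f (σ y))‖ = ‖g (φ ω, y) - g (φ (σ y), r y)‖ := by rw [hg_inv, hσ]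
    _ ≤ ‖φ (σ y) - φ ω‖ + ‖y - r y‖ := by rw [← norm_sub_rev (φ ω)]; exact hg_lip _ _ _ _
    _ ≤ (1 + (1 + C ω) * κ) * ‖y - Φ ω‖ := by linarith

end Retraction

section Orbit

variable {Ω E F : Type*}

/-- The reconstructed system `𝒯(u, y) = (w̄(y), g(u, y))`, with `w̄ = φ ∘ f ∘ σ`. -/
def reconstructedMap (φ : Ω → E) (f : Ω → Ω) (σ : F → Ω) (g : E × F → F) (z : E × F) : E × F :=
  (φ (f (σ z.2)), g z)

/-- The points `ωₙ` whose images under `h = (φ, Φ)` the orbit of `z₀` under `𝒯` shadows. -/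
def shadowSeq (φ : Ω → E) (f : Ω → Ω) (σ : F → Ω) (g : E × F → F) (ω₀ : Ω) (z₀ : E × F) :
    ℕ → Ω
  | 0 => ω₀
  | n + 1 => f (σ ((reconstructedMap φ f σ g)^[n] z₀).2)

variable {φ : Ω → E} {f : Ω → Ω} {σ : F → Ω} {g : E × F → F} {ω₀ : Ω} {z₀ : E × F}

theorem fst_iterate_reconstructedMap (h : z₀.1 = φ ω₀) :
    ∀ n, ((reconstructedMap φ f σ g)^[n] z₀).1 = φ (shadowSeq φ f σ g ω₀ z₀ n)
  | 0 => h
  | n + 1 => by rw [Function.iterate_succ_apply']; rfl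

theorem norm_snd_iterate_sub_shadowSeq_succ_le [SeminormedAddCommGroup E]
    [SeminormedAddCommGroup F] {Φ : Ω → F} {r : F → F} {κ : ℝ} {C : Ω → ℝ}
    (hσ : ∀ y, Φ (σ y) = r y) (hr_retract : ∀ ω, r (Φ ω) = Φ ω)
    (hr_lip : ∀ y y', ‖r y - r y'‖ ≤ κ * ‖y - y'‖) (hC0 : ∀ ω, 0 ≤ C ω)
    (hC : ∀ ω ω', ‖φ ω' - φ ω‖ ≤ C ω * ‖Φ ω' - Φ ω‖)
    (hg_inv : ∀ ω, Φ (f ω) = g (φ ω, Φ ω))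
    (hg_lip : ∀ u u' y y', ‖g (u, y) - g (u', y')‖ ≤ ‖u - u'‖ + ‖y - y'‖)
    (h : z₀.1 = φ ω₀) (n : ℕ) :
    ‖((reconstructedMap φ f σ g)^[n + 1] z₀).2 - Φ (shadowSeq φ f σ g ω₀ z₀ (n + 1))‖ ≤
      (1 + (1 + C (shadowSeq φ f σ g ω₀ z₀ n)) * κ) *
        ‖((reconstructedMap φ f σ g)^[n] z₀).2 - Φ (shadowSeq φ f σ g ω₀ z₀ n)‖ := by
  have hz : (reconstructedMap φ f σ g)^[n] z₀ =
      (φ (shadowSeq φ f σ g ω₀ z₀ n), ((reconstructedMap φ f σ g)^[n] z₀).2) :=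
    Prod.ext (fst_iterate_reconstructedMap h n) rfl
  rw [Function.iterate_succ_apply', shadowSeq, reconstructedMap, hz]
  exact norm_step_sub_le_of_retract hσ hr_retract hr_lip hC0 hC hg_inv hg_lip _ _

end Orbit

theorem iterated_perturbation_general {Ω : Type*} [Nonempty Ω] {d L : ℕ}
    (f : Ω → Ω) (φ : Ω → (Fin d → ℝ)) (Φ : Ω → (Fin L → ℝ))
    (g : (Fin d → ℝ) × (Fin L → ℝ) → (Fin L → ℝ))
    (hg_inv : ∀ ω : Ω, Φ (f ω) = g (φ ω, Φ ω))
    (hg_lip : ∀ (u u' : Fin d → ℝ) (y y' : Fin L → ℝ),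
      ‖g (u, y) - g (u', y')‖ ≤ ‖u - u'‖ + ‖y - y'‖)
    (r : (Fin L → ℝ) → (Fin L → ℝ)) (κ : ℝ) (hκ : 0 ≤ κ)
    (hr_range : ∀ y : Fin L → ℝ, r y ∈ Set.range Φ)
    (hr_retract : ∀ ω : Ω, r (Φ ω) = Φ ω)
    (hr_lip : ∀ y y' : Fin L → ℝ, ‖r y - r y'‖ ≤ κ * ‖y - y'‖)
    (C : Ω → ℝ) (hC0 : ∀ ω : Ω, 0 ≤ C ω)
    (hC : ∀ ω ω' : Ω, ‖φ ω' - φ ω‖ ≤ C ω * ‖Φ ω' - Φ ω‖)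
    (ω₀ : Ω) (δ₀ : Fin L → ℝ) :
    ∃ ω : ℕ → Ω, ω 0 = ω₀ ∧
      let wbar : (Fin L → ℝ) → (Fin d → ℝ) := fun y => φ (f (Function.invFun Φ (r y)))
      let T : (Fin d → ℝ) × (Fin L → ℝ) → (Fin d → ℝ) × (Fin L → ℝ) :=
        fun z => (wbar z.2, g z)
      let z₀' : (Fin d → ℝ) × (Fin L → ℝ) := (φ ω₀, Φ ω₀ + δ₀)
      let δ : ℕ → (Fin L → ℝ) := fun n => (T^[n] z₀').2 - Φ (ω n)
      let Ct : Ω → ℝ := fun ω' => (1 + C ω') * κ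
      ∀ n : ℕ,
        ((T^[n] z₀').1 = φ (ω n)) ∧
        (ω (n + 1) = f (Function.invFun Φ (r (Φ (ω n) + δ n)))) ∧
        (‖δ (n + 1)‖ ≤ (1 + Ct (ω n)) * ‖δ n‖) ∧
        (‖δ n‖ ≤ ‖δ₀‖ * ∏ i ∈ Finset.range n, (1 + Ct (ω i))) ∧
        (‖φ (Function.invFun Φ (r (Φ (ω n) + δ n))) - φ (ω n)‖ +
            ‖Φ (Function.invFun Φ (r (Φ (ω n) + δ n))) - Φ (ω n)‖
          ≤ Ct (ω n) * ‖δ n‖) ∧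
        (‖φ (Function.invFun Φ (r (Φ (ω n) + δ n))) - φ (ω n)‖ +
            ‖Φ (Function.invFun Φ (r (Φ (ω n) + δ n))) - Φ (ω n)‖
          ≤ ‖δ₀‖ * Ct (ω n) * ∏ i ∈ Finset.range n, (1 + Ct (ω i))) := by
  let σ : (Fin L → ℝ) → Ω := fun y => Function.invFun Φ (r y)
  have hσ : ∀ y, Φ (σ y) = r y := fun y => Function.invFun_eq (hr_range y)
  let z₀ : (Fin d → ℝ) × (Fin L → ℝ) := (φ ω₀, Φ ω₀ + δ₀)
  let ω := shadowSeq φ f σ g ω₀ z₀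
  refine ⟨ω, rfl, ?_⟩
  intro _ T z₀' δ Ct
  have hfst : ∀ n, (T^[n] z₀').1 = φ (ω n) :=
    fst_iterate_reconstructedMap (φ := φ) (f := f) (σ := σ) (g := g) (z₀ := z₀) rfl
  have hstep : ∀ n, ‖δ (n + 1)‖ ≤ (1 + Ct (ω n)) * ‖δ n‖ :=
    norm_snd_iterate_sub_shadowSeq_succ_le hσ hr_retract hr_lip hC0 hC hg_inv hg_lip rfl
  have hCt : ∀ ω', 0 ≤ Ct ω' := fun ω' => mul_nonneg (by linarith [hC0 ω']) hκ
  have hprod : ∀ n, ‖δ n‖ ≤ ‖δ₀‖ * ∏ i ∈ range n, (1 + Ct (ω i)) := by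
    have hδ₀ : δ 0 = δ₀ := add_sub_cancel_left _ _
    simpa only [hδ₀] using le_mul_prod_range_of_le_mul (a := fun n => ‖δ n‖)
      (fun n => by linarith [hCt (ω n)]) hstep
  have hy : ∀ n, Φ (ω n) + δ n = (T^[n] z₀').2 := fun n => add_sub_cancel _ _
  have hpert : ∀ n, ‖φ (σ (Φ (ω n) + δ n)) - φ (ω n)‖ + ‖Φ (σ (Φ (ω n) + δ n)) - Φ (ω n)‖ ≤
      Ct (ω n) * ‖δ n‖ := fun n => by
    rw [hy]; exact norm_add_norm_snd_sub_le_of_retract hσ hr_retract hr_lip hC0 hC _ _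
  refine fun n => ⟨hfst n, by rw [hy]; rfl, hstep n, hprod n, hpert n, (hpert n).trans ?_⟩
  calc Ct (ω n) * ‖δ n‖ ≤ Ct (ω n) * (‖δ₀‖ * ∏ i ∈ range n, (1 + Ct (ω i))) :=
        mul_le_mul_of_nonneg_left (hprod n) (hCt _)
    _ = ‖δ₀‖ * Ct (ω n) * ∏ i ∈ range n, (1 + Ct (ω i)) := by ring

/-- iterated perturbation lemma. Starting from a Φ-perturbation
of a point of X = h(Ω), every iterate of the reconstructed system
𝒯(u, y) = (w̄(y), g(u, y)) remains a Φ-perturbation of a point of X, with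
perturbation sizes controlled multiplicatively by the factors
(1 + (1 + C(ωᵢ))κ). Distances are measured in the norm ‖(u, y)‖ = ‖u‖ + ‖y‖. -/
theorem iterated_perturbation {Ω : Type*} [Nonempty Ω] {d L : ℕ}
    (f : Ω → Ω) (φ : Ω → (Fin d → ℝ)) (Φ : Ω → (Fin L → ℝ))
    (hΦ : Function.Injective Φ)
    (g : (Fin d → ℝ) × (Fin L → ℝ) → (Fin L → ℝ))
    (hg_inv : ∀ ω : Ω, Φ (f ω) = g (φ ω, Φ ω))
    (hg_lip : ∀ (u u' : Fin d → ℝ) (y y' : Fin L → ℝ),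
      ‖g (u, y) - g (u', y')‖ ≤ ‖u - u'‖ + ‖y - y'‖)
    (r : (Fin L → ℝ) → (Fin L → ℝ)) (κ : ℝ) (hκ : 0 ≤ κ)
    (hr_range : ∀ y : Fin L → ℝ, r y ∈ Set.range Φ)
    (hr_retract : ∀ ω : Ω, r (Φ ω) = Φ ω)
    (hr_lip : ∀ y y' : Fin L → ℝ, ‖r y - r y'‖ ≤ κ * ‖y - y'‖)
    (C : Ω → ℝ) (hC0 : ∀ ω : Ω, 0 ≤ C ω)
    (hC : ∀ ω ω' : Ω, ‖φ ω' - φ ω‖ ≤ C ω * ‖Φ ω' - Φ ω‖)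
    (ω₀ : Ω) (δ₀ : Fin L → ℝ) :
    ∃ ω : ℕ → Ω, ω 0 = ω₀ ∧
      let wbar : (Fin L → ℝ) → (Fin d → ℝ) := fun y => φ (f (Function.invFun Φ (r y)))
      let T : (Fin d → ℝ) × (Fin L → ℝ) → (Fin d → ℝ) × (Fin L → ℝ) :=
        fun z => (wbar z.2, g z)
      let z₀' : (Fin d → ℝ) × (Fin L → ℝ) := (φ ω₀, Φ ω₀ + δ₀)
      let δ : ℕ → (Fin L → ℝ) := fun n => (T^[n] z₀').2 - Φ (ω n)
      let Ct : Ω → ℝ := fun ω' => (1 + C ω') * κ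
      ∀ n : ℕ,
        ((T^[n] z₀').1 = φ (ω n)) ∧
        (ω (n + 1) = f (Function.invFun Φ (r (Φ (ω n) + δ n)))) ∧
        (‖δ (n + 1)‖ ≤ (1 + Ct (ω n)) * ‖δ n‖) ∧
        (‖δ n‖ ≤ ‖δ₀‖ * ∏ i ∈ Finset.range n, (1 + Ct (ω i))) ∧
        (‖φ (Function.invFun Φ (r (Φ (ω n) + δ n))) - φ (ω n)‖ +
            ‖Φ (Function.invFun Φ (r (Φ (ω n) + δ n))) - Φ (ω n)‖
          ≤ Ct (ω n) * ‖δ n‖) ∧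
        (‖φ (Function.invFun Φ (r (Φ (ω n) + δ n))) - φ (ω n)‖ +
            ‖Φ (Function.invFun Φ (r (Φ (ω n) + δ n))) - Φ (ω n)‖
          ≤ ‖δ₀‖ * Ct (ω n) * ∏ i ∈ Finset.range n, (1 + Ct (ω i))) :=
  iterated_perturbation_general f φ Φ g hg_inv hg_lip r κ hκ hr_range hr_retract hr_lip C hC0 hC ω₀
    δ₀
end
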